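/- If G is a connected graph with at least two vertices and H is a graph with at least one edge, then every independent set of the lexicographic product G ∘ H is an independent mutual-visibility set; consequently χ_{μ_i}(G ∘ H) = χ(G ∘ H) and μ_i(G ∘ H) = α(G)·α(H). -/

import Mathlib

/-!
An independent set `X` of `G ∘ H` misses a vertex of every fibre `{v} × V(H)`, since a fibre
containing an edge of `H` cannot lie inside `X`. Two vertices of `X` in different fibres are
joined by a geodesic of `G` lifted through such missed vertices: projecting to `G` shows that
the distance between different fibres of `G ∘ H` is the distance in `G`. Two vertices of `X` in
one fibre are at distance two through any vertex of a neighbouring fibre, which `X` misses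
because it is adjacent to both. So independent sets and IMV sets of `G ∘ H` coincide.
-/

open SimpleGraph

variable {V W : Type*}

/-- Two vertices of `X` are `X`-visible if some geodesic between them has all
internal vertices outside `X`; `X` is a mutual-visibility set if this holds
for every reachable pair of vertices of `X`. -/
def IsMVSet (G : SimpleGraph V) (X : Set V) : Prop :=
  ∀ x ∈ X, ∀ y ∈ X, x ≠ y → G.Reachable x y →
    ∃ p : G.Walk x y, p.length = G.dist x y ∧
      ∀ z ∈ p.support, z ≠ x → z ≠ y → z ∉ X

/-- An independent mutual-visibility set. -/
def IsIMVSet (G : SimpleGraph V) (X : Set V) : Prop :=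
  (∀ x ∈ X, ∀ y ∈ X, ¬ G.Adj x y) ∧ IsMVSet G X

/-- The mutual-visibility chromatic number: the least `k` such that the vertex
set partitions into `k` mutual-visibility sets. -/
noncomputable def mvChrom (G : SimpleGraph V) : ℕ :=
  sInf {k | ∃ f : V → Fin k, ∀ i, IsMVSet G (f ⁻¹' {i})}

/-- The independent mutual-visibility chromatic number. -/
noncomputable def imvChrom (G : SimpleGraph V) : ℕ :=
  sInf {k | ∃ f : V → Fin k, ∀ i, IsIMVSet G (f ⁻¹' {i})}

/-- The chromatic number, as a natural number. -/
noncomputable def chromNat (G : SimpleGraph V) : ℕ :=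
  sInf {k | G.Colorable k}

/-- The independent mutual-visibility number `μᵢ(G)`. -/
noncomputable def imvNum (G : SimpleGraph V) : ℕ :=
  sSup {n | ∃ s : Finset V, IsIMVSet G ↑s ∧ s.card = n}

/-- The independence number `α(G)`. -/
noncomputable def indepNum (G : SimpleGraph V) : ℕ :=
  sSup {n | ∃ s : Finset V, (∀ x ∈ s, ∀ y ∈ s, ¬ G.Adj x y) ∧ s.card = n}

/-- The lexicographic product `G ∘ H`. -/
def lexProd (G : SimpleGraph V) (H : SimpleGraph W) : SimpleGraph (V × W) where
  Adj a b := G.Adj a.1 b.1 ∨ (a.1 = b.1 ∧ H.Adj a.2 b.2)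
  symm := by
    constructor
    rintro a b (h | ⟨h1, h2⟩)
    · exact Or.inl h.symm
    · exact Or.inr ⟨h1.symm, h2.symm⟩
  loopless := by
    constructor
    rintro a (h | ⟨-, h⟩)
    · exact G.irrefl h
    · exact H.irrefl h

section Independence

variable {G : SimpleGraph V}

lemma bddAbove_setOf_card [Fintype V] (P : Finset V → Prop) :
    BddAbove {n | ∃ s : Finset V, P s ∧ s.card = n} :=
  ⟨Fintype.card V, fun _ ⟨s, _, hs⟩ => hs ▸ s.card_le_univ⟩

lemma card_le_indepNum [Fintype V] {s : Finset V} (hs : ∀ x ∈ s, ∀ y ∈ s, ¬ G.Adj x y) :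
    s.card ≤ _root_.indepNum G :=
  le_csSup (bddAbove_setOf_card _) ⟨s, hs, rfl⟩

lemma exists_card_eq_indepNum [Fintype V] (G : SimpleGraph V) :
    ∃ s : Finset V, (∀ x ∈ s, ∀ y ∈ s, ¬ G.Adj x y) ∧ s.card = _root_.indepNum G :=
  Nat.sSup_mem (s := {n | ∃ s : Finset V, (∀ x ∈ s, ∀ y ∈ s, ¬ G.Adj x y) ∧ s.card = n})
    ⟨0, ∅, by simp⟩ (bddAbove_setOf_card _)

lemma imvChrom_eq_chromNat
    (hG : ∀ X : Set V, (∀ x ∈ X, ∀ y ∈ X, ¬ G.Adj x y) → IsIMVSet G X) :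
    imvChrom G = chromNat G := by
  unfold imvChrom chromNat
  congr 1
  ext k
  constructor
  · rintro ⟨f, hf⟩
    exact ⟨Coloring.mk f fun {x y} hxy hfxy => (hf (f y)).1 x hfxy y rfl hxy⟩
  · rintro ⟨C⟩
    exact ⟨C, fun i => hG _ fun x hx y hy hxy => C.valid hxy (hx.trans hy.symm)⟩

lemma imvNum_eq_indepNum
    (hG : ∀ X : Set V, (∀ x ∈ X, ∀ y ∈ X, ¬ G.Adj x y) → IsIMVSet G X) :
    imvNum G = _root_.indepNum G := by
  unfold imvNum _root_.indepNum
  congr 1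
  ext n
  exact ⟨fun ⟨s, hs, hn⟩ => ⟨s, hs.1, hn⟩, fun ⟨s, hs, hn⟩ => ⟨s, hG _ hs, hn⟩⟩

end Independence

section LexProd

variable {G : SimpleGraph V} {H : SimpleGraph W}

def lexProdSection (G : SimpleGraph V) (H : SimpleGraph W) (σ : V → W) : G →g lexProd G H where
  toFun v := (v, σ v)
  map_rel' := Or.inl

@[simp]
lemma lexProdSection_apply {G : SimpleGraph V} {H : SimpleGraph W} (σ : V → W) (v : V) :
    lexProdSection G H σ v = (v, σ v) := rfl

lemma exists_walk_fst_length_le {x y : V × W} (p : (lexProd G H).Walk x y) :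
    ∃ q : G.Walk x.1 y.1, q.length ≤ p.length := by
  induction p with
  | nil => exact ⟨.nil, le_rfl⟩
  | cons hadj _ ih =>
    obtain ⟨q, hq⟩ := ih
    rw [Walk.length_cons]
    rcases hadj with hG | ⟨hfst, -⟩
    · exact ⟨.cons hG q, by simpa using hq⟩
    · exact ⟨q.copy hfst.symm rfl, by simp; omega⟩

lemma SimpleGraph.Reachable.of_lexProd {x y : V × W} (h : (lexProd G H).Reachable x y) :
    G.Reachable x.1 y.1 := by
  obtain ⟨p⟩ := h
  obtain ⟨q, -⟩ := exists_walk_fst_length_le p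
  exact ⟨q⟩

lemma dist_fst_le_dist_lexProd {x y : V × W} (h : (lexProd G H).Reachable x y) :
    G.dist x.1 y.1 ≤ (lexProd G H).dist x y := by
  obtain ⟨p, hp⟩ := h.exists_walk_length_eq_dist
  obtain ⟨q, hq⟩ := exists_walk_fst_length_le p
  exact (dist_le q).trans (hp ▸ hq)

variable {X : Set (V × W)}

lemma exists_notMem_of_indep {a b : W} (hab : H.Adj a b)
    (hX : ∀ x ∈ X, ∀ y ∈ X, ¬ (lexProd G H).Adj x y) (v : V) : ∃ w, (v, w) ∉ X := by
  by_contra! h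
  exact hX _ (h a) _ (h b) (Or.inr ⟨rfl, hab⟩)

lemma lexProd_visible_of_fst_eq (hX : ∀ x ∈ X, ∀ y ∈ X, ¬ (lexProd G H).Adj x y)
    {g u : V} (hgu : G.Adj g u) (a : W) {h h' : W} (hx : (g, h) ∈ X) (hy : (g, h') ∈ X)
    (hne : h ≠ h') :
    ∃ p : (lexProd G H).Walk (g, h) (g, h'), p.length = (lexProd G H).dist (g, h) (g, h') ∧
      ∀ z ∈ p.support, z ≠ (g, h) → z ≠ (g, h') → z ∉ X := by
  have e₁ : (lexProd G H).Adj (g, h) (u, a) := Or.inl hgu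
  have e₂ : (lexProd G H).Adj (u, a) (g, h') := Or.inl hgu.symm
  refine ⟨.cons e₁ (.cons e₂ .nil), ?_, ?_⟩
  · have hle : (lexProd G H).dist (g, h) (g, h') ≤ 2 := dist_le (.cons e₁ (.cons e₂ .nil))
    have hpos : 0 < (lexProd G H).dist (g, h) (g, h') :=
      (e₁.reachable.trans e₂.reachable).pos_dist_of_ne (by simpa using hne)
    have hne1 : (lexProd G H).dist (g, h) (g, h') ≠ 1 :=
      fun hd => hX _ hx _ hy (dist_eq_one_iff_adj.mp hd)
    simp only [Walk.length_cons, Walk.length_nil]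
    omega
  · intro z hz hzx hzy hzX
    simp only [Walk.support_cons, Walk.support_nil, List.mem_cons,
      List.not_mem_nil, or_false] at hz
    rcases hz with rfl | rfl | rfl
    · exact hzx rfl
    · exact hX _ hx _ hzX e₁
    · exact hzy rfl

lemma lexProd_visible_of_fst_ne {f : V → W} (hf : ∀ v, (v, f v) ∉ X) {g g' : V} {h h' : W}
    (hgg' : g ≠ g') (hreach : (lexProd G H).Reachable (g, h) (g', h')) :
    ∃ p : (lexProd G H).Walk (g, h) (g', h'),
      p.length = (lexProd G H).dist (g, h) (g', h') ∧
      ∀ z ∈ p.support, z ≠ (g, h) → z ≠ (g', h') → z ∉ X := by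
  classical
  obtain ⟨q, hq⟩ := hreach.of_lexProd.exists_walk_length_eq_dist
  set σ := Function.update (Function.update f g h) g' h'
  have hσg : σ g = h := by simp [σ, hgg']
  have hσg' : σ g' = h' := by simp [σ]
  set p : (lexProd G H).Walk (g, h) (g', h') :=
    (q.map (lexProdSection G H σ)).copy (by simp [hσg]) (by simp [hσg']) with hp
  refine ⟨p, le_antisymm (dist_le p) ?_ |>.symm, ?_⟩
  · rw [hp, Walk.length_copy, Walk.length_map, hq]
    exact dist_fst_le_dist_lexProd hreach
  · intro z hz hzx hzy
    rw [hp, Walk.support_copy, Walk.support_map, List.mem_map] at hz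
    obtain ⟨v, -, rfl⟩ := hz
    have hvg : v ≠ g := by rintro rfl; exact hzx (by simp [hσg])
    have hvg' : v ≠ g' := by rintro rfl; exact hzy (by simp [hσg'])
    simpa [σ, hvg, hvg'] using hf v

lemma isIMVSet_lexProd_of_indep (hG : ∀ v, ∃ u, G.Adj v u) {a b : W} (hab : H.Adj a b)
    (hX : ∀ x ∈ X, ∀ y ∈ X, ¬ (lexProd G H).Adj x y) : IsIMVSet (lexProd G H) X := by
  choose f hf using exists_notMem_of_indep hab hX
  refine ⟨hX, ?_⟩
  rintro ⟨g, h⟩ hx ⟨g', h'⟩ hy hne hreach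
  by_cases hgg' : g = g'
  · subst hgg'
    obtain ⟨u, hgu⟩ := hG g
    exact lexProd_visible_of_fst_eq hX hgu a hx hy (by simpa using hne)
  · exact lexProd_visible_of_fst_ne hf hgg' hreach

lemma card_fiber_le_indepNum [DecidableEq V] [Fintype W] {s : Finset (V × W)}
    (hs : ∀ x ∈ s, ∀ y ∈ s, ¬ (lexProd G H).Adj x y) (g : V) :
    {x ∈ s | x.1 = g}.card ≤ _root_.indepNum H := by
  classical
  have hinj : Set.InjOn Prod.snd (↑{x ∈ s | x.1 = g} : Set (V × W)) := by
    intro x hx y hy hxy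
    rw [Finset.coe_filter] at hx hy
    exact Prod.ext (hx.2.trans hy.2.symm) hxy
  rw [← Finset.card_image_of_injOn hinj]
  refine card_le_indepNum fun w hw w' hw' hww' => ?_
  obtain ⟨x, hx, rfl⟩ := Finset.mem_image.mp hw
  obtain ⟨y, hy, rfl⟩ := Finset.mem_image.mp hw'
  rw [Finset.mem_filter] at hx hy
  exact hs x hx.1 y hy.1 (Or.inr ⟨hx.2.trans hy.2.symm, hww'⟩)

lemma indepNum_lexProd [Fintype V] [Fintype W] :
    _root_.indepNum (lexProd G H) = _root_.indepNum G * _root_.indepNum H := by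
  classical
  apply le_antisymm
  · obtain ⟨s, hs, hcard⟩ := exists_card_eq_indepNum (lexProd G H)
    have hfst : (s.image Prod.fst).card ≤ _root_.indepNum G := by
      refine card_le_indepNum fun g hg g' hg' hgg' => ?_
      obtain ⟨x, hx, rfl⟩ := Finset.mem_image.mp hg
      obtain ⟨y, hy, rfl⟩ := Finset.mem_image.mp hg'
      exact hs x hx y hy (Or.inl hgg')
    calc _root_.indepNum (lexProd G H) = s.card := hcard.symm
      _ ≤ _root_.indepNum H * (s.image Prod.fst).card :=
        Finset.card_le_mul_card_image s _ fun g _ => card_fiber_le_indepNum hs g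
      _ ≤ _root_.indepNum G * _root_.indepNum H := by
        rw [mul_comm]
        exact Nat.mul_le_mul_right _ hfst
  · obtain ⟨sG, hsG, hcardG⟩ := exists_card_eq_indepNum G
    obtain ⟨sH, hsH, hcardH⟩ := exists_card_eq_indepNum H
    rw [← hcardG, ← hcardH, ← Finset.card_product]
    refine card_le_indepNum fun x hx y hy hxy => ?_
    rw [Finset.mem_product] at hx hy
    rcases hxy with hxy | ⟨-, hxy⟩
    · exact hsG _ hx.1 _ hy.1 hxy
    · exact hsH _ hx.2 _ hy.2 hxy

end LexProd

theorem stmt18 [Fintype V] [Fintype W] (G : SimpleGraph V) (H : SimpleGraph W)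
    (hconn : G.Connected) (hV : 2 ≤ Fintype.card V) (hE : ∃ a b : W, H.Adj a b) :
    (∀ X : Set (V × W), (∀ x ∈ X, ∀ y ∈ X, ¬ (lexProd G H).Adj x y) →
      IsIMVSet (lexProd G H) X) ∧
    imvChrom (lexProd G H) = chromNat (lexProd G H) ∧
    imvNum (lexProd G H) = _root_.indepNum G * _root_.indepNum H := by
  obtain ⟨a, b, hab⟩ := hE
  have : Nontrivial V := Fintype.one_lt_card_iff_nontrivial.mp hV
  have hindep : ∀ X : Set (V × W), (∀ x ∈ X, ∀ y ∈ X, ¬ (lexProd G H).Adj x y) →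
      IsIMVSet (lexProd G H) X :=
    fun X => isIMVSet_lexProd_of_indep hconn.preconnected.exists_adj_of_nontrivial hab
  exact ⟨hindep, imvChrom_eq_chromNat hindep, (imvNum_eq_indepNum hindep).trans indepNum_lexProd⟩
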